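/- For integers k, l, m ≥ 1 with l, m ≤ k, one has l! · m! · c^{(k)}_{l,m} = k! · ∑_{s=1}^{k} ∑_{t=1}^{k} (-1)^{l+s+m+t} · C(l,s) · C(m,t) · C(s·t, k), where C(·,·) denotes the binomial coefficient (with C(n,j) = 0 for j > n). -/
import Mathlib


open Nat

/-- Unsigned Stirling numbers of the first kind: the number of permutations of
`n` elements with exactly `p` cycles. -/
def stirling1 : ℕ → ℕ → ℕ
  | 0, 0 => 1
  | 0, _ + 1 => 0
  | _ + 1, 0 => 0
  | n + 1, p + 1 => n * stirling1 n (p + 1) + stirling1 n p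

/-- Stirling numbers of the second kind: the number of partitions of an
`n`-element set into `p` nonempty blocks (`stirling2 p l = 0` when `p < l`). -/
def stirling2 : ℕ → ℕ → ℕ
  | 0, 0 => 1
  | 0, _ + 1 => 0
  | _ + 1, 0 => 0
  | n + 1, p + 1 => (p + 1) * stirling2 n (p + 1) + stirling2 n p

/-- The coefficients `c^(k)_{l,m} = ∑_{p=1}^k (-1)^(k-p) s(k,p) S(p,l) S(p,m)`. -/
def c (k l m : ℕ) : ℤ :=
  ∑ p ∈ Finset.Icc 1 k,
    (-1 : ℤ) ^ (k - p) * (stirling1 k p : ℤ) * (stirling2 p l : ℤ) * (stirling2 p m : ℤ)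

section Aux
open Finset

lemma stirling1_eq_zero_of_lt : ∀ k p : ℕ, k < p → stirling1 k p = 0
  | 0, 0, h => absurd h (by omega)
  | 0, p+1, _ => rfl
  | k+1, 0, h => absurd h (by omega)
  | k+1, p+1, h => by
      simp only [stirling1]
      rw [stirling1_eq_zero_of_lt k (p+1) (by omega), stirling1_eq_zero_of_lt k p (by omega)]
      simp

lemma stirling1_mul_zero (n : ℕ) : (n : ℤ) * stirling1 n 0 = 0 := by
  cases n with
  | zero => simp
  | succ j => simp [stirling1]

lemma sum_stirling1_prod (k : ℕ) (x : ℤ) :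
    ∑ p ∈ range (k+1), (-1:ℤ)^(k+p) * stirling1 k p * x^p = ∏ i ∈ range k, (x - i) := by
  induction k with
  | zero => simp [stirling1]
  | succ n ih =>
      rw [prod_range_succ, ← ih]
      rw [Finset.sum_range_succ' _ (n+1)]
      have h0 : stirling1 (n+1) 0 = 0 := rfl
      rw [h0]
      have hterm : ∀ q ∈ range (n+1), (-1:ℤ)^(n+1+(q+1)) * stirling1 (n+1) (q+1) * x^(q+1)
          = (n:ℤ) * ((-1:ℤ)^(n+q) * stirling1 n (q+1) * x^(q+1))
            + x * ((-1:ℤ)^(n+q) * stirling1 n q * x^q) := by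
        intro q _
        have : stirling1 (n+1) (q+1) = n * stirling1 n (q+1) + stirling1 n q := rfl
        rw [this]
        have hsgn : (-1:ℤ)^(n+1+(q+1)) = (-1:ℤ)^(n+q) := by
          rw [show n+1+(q+1) = (n+q)+2 by ring, pow_add]; norm_num
        rw [hsgn]
        push_cast
        ring
      rw [Finset.sum_congr rfl hterm, Finset.sum_add_distrib, ← Finset.mul_sum, ← Finset.mul_sum]
      -- first sum : ∑_{q∈range(n+1)} (-1)^(n+q) s1(n,q+1) x^(q+1)
      have hA : ∑ q ∈ range (n+1), (-1:ℤ)^(n+q) * stirling1 n (q+1) * x^(q+1)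
          = -(∑ p ∈ range (n+1), (-1:ℤ)^(n+p) * stirling1 n p * x^p) + (-1:ℤ)^n * stirling1 n 0 := by
        rw [Finset.sum_range_succ' (fun p => (-1:ℤ)^(n+p) * stirling1 n p * x^p) n]
        rw [Finset.sum_range_succ _ n]
        rw [stirling1_eq_zero_of_lt n (n+1) (by omega)]
        have : ∀ q ∈ range n, (-1:ℤ)^(n+(q+1)) * stirling1 n (q+1) * x^(q+1)
            = -((-1:ℤ)^(n+q) * stirling1 n (q+1) * x^(q+1)) := by
          intro q _
          rw [show n+(q+1) = (n+q)+1 by ring, pow_succ]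
          ring
        rw [Finset.sum_congr rfl this, Finset.sum_neg_distrib]
        push_cast
        ring
      rw [hA]
      have h2 : (n:ℤ) * ((-1:ℤ)^n * stirling1 n 0) = 0 ∨ True := Or.inr trivial
      have hns : (n:ℤ) * ((-1:ℤ)^n * stirling1 n 0) = 0 := by
        cases n with
        | zero => simp
        | succ j => simp [stirling1]
      rw [mul_add, hns]
      ring

lemma prod_sub_eq (k n : ℕ) : ∏ i ∈ range k, ((n:ℤ) - i) = (k ! : ℤ) * n.choose k := by
  induction k with
  | zero => simp
  | succ j ih =>
      rw [prod_range_succ, ih]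
      rcases lt_or_ge n (j+1) with h | h
      · rw [Nat.choose_eq_zero_of_lt (show n < j+1 by omega)]
        rcases Nat.lt_or_ge n j with h2 | h2
        · rw [Nat.choose_eq_zero_of_lt h2]
          push_cast; ring
        · have hnj : n = j := by omega
          subst hnj
          push_cast; ring
      · have hc : ((n - j : ℕ) : ℤ) = (n:ℤ) - j := by omega
        have h4 : ((n.choose (j+1) : ℤ) * (j+1)) = (n.choose j : ℤ) * ((n:ℤ) - j) := by
          rw [← hc]
          exact_mod_cast Nat.choose_succ_right_eq n j
        rw [Nat.factorial_succ]
        push_cast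
        linear_combination (-(j ! : ℤ)) * h4
-- L2

lemma sum_stirling2 : ∀ (p l : ℕ), (l ! : ℤ) * stirling2 p l
    = ∑ s ∈ range (l+1), (-1:ℤ)^(l+s) * l.choose s * (s:ℤ)^p := by
  intro p
  induction p with
  | zero =>
      intro l
      cases l with
      | zero => simp [stirling2]
      | succ L =>
          have h0 : stirling2 0 (L+1) = 0 := rfl
          rw [h0]
          have : ∀ s ∈ range (L+2), (-1:ℤ)^(L+1+s) * (L+1).choose s * (s:ℤ)^0
              = (-1:ℤ)^(L+1) * ((-1:ℤ)^s * (L+1).choose s) := by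
            intro s _
            rw [pow_add]; ring
          rw [Finset.sum_congr rfl this, ← Finset.mul_sum]
          rw [Int.alternating_sum_range_choose]
          simp
  | succ p ih =>
      intro l
      cases l with
      | zero =>
          simp [stirling2]
      | succ L =>
          -- LHS recurrence
          have hrec : stirling2 (p+1) (L+1) = (L+1) * stirling2 p (L+1) + stirling2 p L := rfl
          rw [hrec]
          -- RHS manipulation
          rw [Finset.sum_range_succ' _ (L+1)]
          simp only [Nat.cast_zero, ne_eq]
          have hz : (-1:ℤ)^(L+1+0) * (L+1).choose 0 * (0:ℤ)^(p+1) = 0 := by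
            simp [pow_succ]
          rw [hz, add_zero]
          have hterm : ∀ q ∈ range (L+1),
              (-1:ℤ)^(L+1+(q+1)) * (L+1).choose (q+1) * ((q+1:ℕ):ℤ)^(p+1)
              = (L+1:ℤ) * ((-1:ℤ)^(L+q) * (L.choose q) * ((q+1:ℕ):ℤ)^p) := by
            intro q _
            have hsgn : (-1:ℤ)^(L+1+(q+1)) = (-1:ℤ)^(L+q) := by
              rw [show L+1+(q+1) = (L+q)+2 by ring, pow_add]; norm_num
            have hch : ((L+1).choose (q+1) : ℤ) * ((q+1:ℕ):ℤ) = (L+1:ℤ) * (L.choose q) := by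
              have := Nat.add_one_mul_choose_eq L q
              exact_mod_cast by push_cast; exact_mod_cast (Nat.add_one_mul_choose_eq L q).symm
            rw [hsgn]
            calc (-1:ℤ)^(L+q) * (L+1).choose (q+1) * ((q+1:ℕ):ℤ)^(p+1)
                = (-1:ℤ)^(L+q) * (((L+1).choose (q+1) : ℤ) * ((q+1:ℕ):ℤ)) * ((q+1:ℕ):ℤ)^p := by
                  ring
              _ = _ := by rw [hch]; ring
          rw [Finset.sum_congr rfl hterm, ← Finset.mul_sum]
          -- now split choose L q = choose (L+1) (q+1) - choose L (q+1)
          have hsplit : ∀ q ∈ range (L+1),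
              (-1:ℤ)^(L+q) * (L.choose q) * ((q+1:ℕ):ℤ)^p
              = ((-1:ℤ)^(L+q) * ((L+1).choose (q+1)) * ((q+1:ℕ):ℤ)^p)
                - ((-1:ℤ)^(L+q) * (L.choose (q+1)) * ((q+1:ℕ):ℤ)^p) := by
            intro q _
            have : ((L+1).choose (q+1) : ℤ) = L.choose q + L.choose (q+1) := by
              exact_mod_cast congrArg (Nat.cast : ℕ → ℤ) (Nat.choose_succ_succ L q)
            rw [this]; ring
          rw [Finset.sum_congr rfl hsplit, Finset.sum_sub_distrib]
          -- A = ∑ q ∈ range (L+1), (-1)^(L+q) C(L+1,q+1) (q+1)^p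
          have hA : ∑ q ∈ range (L+1), (-1:ℤ)^(L+q) * ((L+1).choose (q+1)) * ((q+1:ℕ):ℤ)^p
              = (∑ s ∈ range (L+2), (-1:ℤ)^(L+1+s) * (L+1).choose s * (s:ℤ)^p)
                - (-1:ℤ)^(L+1) * (0:ℤ)^p := by
            rw [Finset.sum_range_succ' (fun s => (-1:ℤ)^(L+1+s) * (L+1).choose s * (s:ℤ)^p) (L+1)]
            have : ∀ q ∈ range (L+1), (-1:ℤ)^(L+1+(q+1)) * (L+1).choose (q+1) * ((q+1:ℕ):ℤ)^p
                = (-1:ℤ)^(L+q) * ((L+1).choose (q+1)) * ((q+1:ℕ):ℤ)^p := by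
              intro q _
              rw [show L+1+(q+1) = (L+q)+2 by ring, pow_add]; norm_num
            rw [Finset.sum_congr rfl this]
            simp only [Nat.choose_zero_right, Nat.cast_zero, Nat.cast_one]
            push_cast
            ring
          have hB : ∑ q ∈ range (L+1), (-1:ℤ)^(L+q) * (L.choose (q+1)) * ((q+1:ℕ):ℤ)^p
              = -((∑ s ∈ range (L+1), (-1:ℤ)^(L+s) * L.choose s * (s:ℤ)^p)
                  - (-1:ℤ)^L * (0:ℤ)^p) := by
            rw [Finset.sum_range_succ _ L, Nat.choose_eq_zero_of_lt (by omega : L < L+1)]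
            rw [Finset.sum_range_succ' (fun s => (-1:ℤ)^(L+s) * L.choose s * (s:ℤ)^p) L]
            have : ∀ q ∈ range L, (-1:ℤ)^(L+(q+1)) * L.choose (q+1) * ((q+1:ℕ):ℤ)^p
                = -((-1:ℤ)^(L+q) * (L.choose (q+1)) * ((q+1:ℕ):ℤ)^p) := by
              intro q _
              rw [show L+(q+1) = (L+q)+1 by ring, pow_succ]; ring
            rw [Finset.sum_congr rfl this, Finset.sum_neg_distrib]
            simp only [Nat.choose_zero_right, Nat.cast_zero, Nat.cast_one]
            push_cast
            ring
          rw [hA, hB, ← ih (L+1), ← ih L]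
          have hsgncancel : (-1:ℤ)^(L+1) * (0:ℤ)^p + (-1:ℤ)^L * (0:ℤ)^p = 0 := by
            rw [pow_succ]; ring
          rw [Nat.factorial_succ]
          push_cast
          linear_combination (L+1:ℤ) * hsgncancel

lemma sum_stirling1_choose (k n : ℕ) :
    ∑ p ∈ range (k+1), (-1:ℤ)^(k+p) * stirling1 k p * (n:ℤ)^p = (k ! : ℤ) * n.choose k := by
  rw [sum_stirling1_prod, prod_sub_eq]

end Aux

/-- The alternating-sum formula for `c^(k)_{l,m}` obtained from Möbius/matrix inversion. -/
theorem c_alternating_formula (k l m : ℕ) (hk : 1 ≤ k) (hl : 1 ≤ l) (hm : 1 ≤ m)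
    (hlk : l ≤ k) (hmk : m ≤ k) :
    (l ! : ℤ) * (m ! : ℤ) * c k l m =
      (k ! : ℤ) *
        ∑ s ∈ Finset.Icc 1 k, ∑ t ∈ Finset.Icc 1 k,
          (-1 : ℤ) ^ (l + s + m + t) * (l.choose s : ℤ) * (m.choose t : ℤ) *
            ((s * t).choose k : ℤ) := by
  classical
  have hins : Finset.range (k+1) = insert 0 (Finset.Icc 1 k) := by
    ext x
    simp only [Finset.mem_range, Finset.mem_insert, Finset.mem_Icc]
    omega
  have hk0 : stirling1 k 0 = 0 := by
    cases k with
    | zero => omega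
    | succ j => rfl
  -- the common triple sum
  set X : ℤ := ∑ p ∈ Finset.range (k+1), ∑ s ∈ Finset.range (l+1), ∑ t ∈ Finset.range (m+1),
      ((-1:ℤ)^(k+p) * (stirling1 k p : ℤ)) * ((-1:ℤ)^(l+s) * (l.choose s : ℤ) * (s:ℤ)^p)
        * ((-1:ℤ)^(m+t) * (m.choose t : ℤ) * (t:ℤ)^p) with hX
  have hLHS : (l ! : ℤ) * (m ! : ℤ) * c k l m = X := by
    rw [c, Finset.mul_sum]
    have step1 : ∑ p ∈ Finset.Icc 1 k, (l ! : ℤ) * m ! *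
        ((-1:ℤ)^(k-p) * (stirling1 k p : ℤ) * stirling2 p l * stirling2 p m)
        = ∑ p ∈ Finset.range (k+1), (l ! : ℤ) * m ! *
        ((-1:ℤ)^(k+p) * (stirling1 k p : ℤ) * stirling2 p l * stirling2 p m) := by
      rw [hins, Finset.sum_insert (by simp)]
      have hzero : (l ! : ℤ) * m ! *
          ((-1:ℤ)^(k+0) * (stirling1 k 0 : ℤ) * stirling2 0 l * stirling2 0 m) = 0 := by
        rw [hk0]; push_cast; ring
      rw [hzero, zero_add]
      refine Finset.sum_congr rfl ?_
      intro p hp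
      simp only [Finset.mem_Icc] at hp
      have hsgn : (-1:ℤ)^(k+p) = (-1:ℤ)^(k-p) := by
        rw [show k + p = (k - p) + 2*p by omega, pow_add, pow_mul]
        norm_num
      rw [hsgn]
    have step2 : ∀ p ∈ Finset.range (k+1), (l ! : ℤ) * m ! *
        ((-1:ℤ)^(k+p) * (stirling1 k p : ℤ) * stirling2 p l * stirling2 p m)
        = ∑ s ∈ Finset.range (l+1), ∑ t ∈ Finset.range (m+1),
          ((-1:ℤ)^(k+p) * (stirling1 k p : ℤ)) * ((-1:ℤ)^(l+s) * (l.choose s : ℤ) * (s:ℤ)^p)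
            * ((-1:ℤ)^(m+t) * (m.choose t : ℤ) * (t:ℤ)^p) := by
      intro p _
      have e1 : (l ! : ℤ) * m ! *
          ((-1:ℤ)^(k+p) * (stirling1 k p : ℤ) * stirling2 p l * stirling2 p m)
          = ((-1:ℤ)^(k+p) * (stirling1 k p : ℤ)) *
            (((l ! : ℤ) * stirling2 p l) * ((m ! : ℤ) * stirling2 p m)) := by ring
      rw [e1, sum_stirling2 p l, sum_stirling2 p m, Finset.sum_mul_sum, Finset.mul_sum]
      refine Finset.sum_congr rfl ?_
      intro s _
      rw [Finset.mul_sum]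
      refine Finset.sum_congr rfl ?_
      intro t _
      ring
    rw [step1, Finset.sum_congr rfl step2]
  rw [hLHS]
  -- now the RHS
  have hchoose0 : ∀ t : ℕ, ((0 * t).choose k : ℤ) = 0 := by
    intro t
    rw [Nat.zero_mul, Nat.choose_eq_zero_of_lt (by omega)]
    simp
  have hT : ∀ s : ℕ, ∑ t ∈ Finset.Icc 1 k,
      (-1:ℤ)^(l+s+m+t) * (l.choose s : ℤ) * (m.choose t : ℤ) * ((s*t).choose k : ℤ)
      = ∑ t ∈ Finset.range (m+1),
      (-1:ℤ)^(l+s+m+t) * (l.choose s : ℤ) * (m.choose t : ℤ) * ((s*t).choose k : ℤ) := by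
    intro s
    have h1 : ∑ t ∈ Finset.range (k+1),
        (-1:ℤ)^(l+s+m+t) * (l.choose s : ℤ) * (m.choose t : ℤ) * ((s*t).choose k : ℤ)
        = ∑ t ∈ Finset.Icc 1 k,
        (-1:ℤ)^(l+s+m+t) * (l.choose s : ℤ) * (m.choose t : ℤ) * ((s*t).choose k : ℤ) := by
      rw [hins, Finset.sum_insert (by simp)]
      have : ((s*0).choose k : ℤ) = 0 := by
        rw [Nat.mul_zero, Nat.choose_eq_zero_of_lt (by omega)]; simp
      rw [this]
      simp
    rw [← h1]
    refine (Finset.sum_subset (Finset.range_subset_range.mpr (by omega : m+1 ≤ k+1)) ?_).symm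
    intro t _ ht
    simp only [Finset.mem_range, not_lt] at ht
    rw [Nat.choose_eq_zero_of_lt (by omega : m < t)]
    simp
  have hS : ∑ s ∈ Finset.Icc 1 k, ∑ t ∈ Finset.Icc 1 k,
      (-1:ℤ)^(l+s+m+t) * (l.choose s : ℤ) * (m.choose t : ℤ) * ((s*t).choose k : ℤ)
      = ∑ s ∈ Finset.range (l+1), ∑ t ∈ Finset.range (m+1),
      (-1:ℤ)^(l+s+m+t) * (l.choose s : ℤ) * (m.choose t : ℤ) * ((s*t).choose k : ℤ) := by
    rw [Finset.sum_congr rfl (fun s _ => hT s)]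
    have h1 : ∑ s ∈ Finset.range (k+1), ∑ t ∈ Finset.range (m+1),
        (-1:ℤ)^(l+s+m+t) * (l.choose s : ℤ) * (m.choose t : ℤ) * ((s*t).choose k : ℤ)
        = ∑ s ∈ Finset.Icc 1 k, ∑ t ∈ Finset.range (m+1),
        (-1:ℤ)^(l+s+m+t) * (l.choose s : ℤ) * (m.choose t : ℤ) * ((s*t).choose k : ℤ) := by
      rw [hins, Finset.sum_insert (by simp)]
      have : ∑ t ∈ Finset.range (m+1),
          (-1:ℤ)^(l+0+m+t) * (l.choose 0 : ℤ) * (m.choose t : ℤ) * ((0*t).choose k : ℤ) = 0 := by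
        refine Finset.sum_eq_zero ?_
        intro t _
        rw [hchoose0 t]; ring
      rw [this, zero_add]
    rw [← h1]
    refine (Finset.sum_subset (Finset.range_subset_range.mpr (by omega : l+1 ≤ k+1)) ?_).symm
    intro s _ hs
    simp only [Finset.mem_range, not_lt] at hs
    refine Finset.sum_eq_zero ?_
    intro t _
    rw [Nat.choose_eq_zero_of_lt (by omega : l < s)]
    simp
  rw [hS, Finset.mul_sum]
  have step3 : ∀ s ∈ Finset.range (l+1), (k ! : ℤ) * ∑ t ∈ Finset.range (m+1),
      (-1:ℤ)^(l+s+m+t) * (l.choose s : ℤ) * (m.choose t : ℤ) * ((s*t).choose k : ℤ)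
      = ∑ t ∈ Finset.range (m+1), ∑ p ∈ Finset.range (k+1),
        ((-1:ℤ)^(k+p) * (stirling1 k p : ℤ)) * ((-1:ℤ)^(l+s) * (l.choose s : ℤ) * (s:ℤ)^p)
          * ((-1:ℤ)^(m+t) * (m.choose t : ℤ) * (t:ℤ)^p) := by
    intro s _
    rw [Finset.mul_sum]
    refine Finset.sum_congr rfl ?_
    intro t _
    have e2 : (k ! : ℤ) * ((-1:ℤ)^(l+s+m+t) * (l.choose s : ℤ) * (m.choose t : ℤ)
        * ((s*t).choose k : ℤ))
        = ((-1:ℤ)^(l+s) * (l.choose s : ℤ)) * ((-1:ℤ)^(m+t) * (m.choose t : ℤ))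
          * ((k ! : ℤ) * ((s*t).choose k : ℤ)) := by
      rw [show l+s+m+t = (l+s)+(m+t) by ring, pow_add]
      ring
    rw [e2, ← sum_stirling1_choose k (s*t), Finset.mul_sum]
    refine Finset.sum_congr rfl ?_
    intro p _
    push_cast
    ring
  rw [Finset.sum_congr rfl step3]
  rw [hX]
  rw [Finset.sum_comm]
  refine Finset.sum_congr rfl ?_
  intro s _
  rw [Finset.sum_comm]
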